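/- Given spatial components N^{(j)}_{(1)k} of a nonlinear connection, the functions G^{(j)}_{(1)1} := (1/2) N^{(j)}_{(1)m} x₁^m transform as a spatial semispray on J¹(ℝ,M). -/

import Mathlib

noncomputable section

/-- Partial derivative of `f` with respect to the `j`-th coordinate at `x`. -/
def pd {n : ℕ} (f : (Fin n → ℝ) → ℝ) (x : Fin n → ℝ) (j : Fin n) : ℝ :=
  deriv (fun s => f (Function.update x j s)) (x j)

/-- Jacobian `∂x̃^k/∂x^j` of the spatial change of coordinates `φ` (with `x̃ = φ x`). -/
def Jac {n : ℕ} (φ : (Fin n → ℝ) → (Fin n → ℝ)) (x : Fin n → ℝ) (k j : Fin n) : ℝ :=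
  pd (fun y => φ y k) x j

/-- `dt/dt̃`, expressed at the old time `t` (with `t̃ = a t`). -/
def dtdT (a : ℝ → ℝ) (t : ℝ) : ℝ := (deriv a t)⁻¹

/-- The induced fibre coordinate `x̃₁^k = (∂x̃^k/∂x^j)(dt/dt̃) x₁^j`. -/
def fib {n : ℕ} (a : ℝ → ℝ) (φ : (Fin n → ℝ) → (Fin n → ℝ))
    (t : ℝ) (x v : Fin n → ℝ) (k : Fin n) : ℝ :=
  (∑ j, Jac φ x k j * v j) * dtdT a t

/-- A (global) smooth diffeomorphic change of coordinates `t̃ = a t`, `x̃ = φ x`,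
with inverse maps `b` and `ψ`. -/
def IsCoordChange (n : ℕ) (a b : ℝ → ℝ) (φ ψ : (Fin n → ℝ) → (Fin n → ℝ)) : Prop :=
  ContDiff ℝ (⊤ : ℕ∞) a ∧ ContDiff ℝ (⊤ : ℕ∞) b ∧ (∀ t, b (a t) = t) ∧ (∀ s, a (b s) = s) ∧
    (∀ t, deriv a t ≠ 0) ∧ ContDiff ℝ (⊤ : ℕ∞) φ ∧ ContDiff ℝ (⊤ : ℕ∞) ψ ∧
    (∀ x, ψ (φ x) = x) ∧ (∀ y, φ (ψ y) = y)

/-- Smoothness of a local object on the 1-jet space. -/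
def SmoothJet {n : ℕ} (G : ℝ → (Fin n → ℝ) → (Fin n → ℝ) → Fin n → ℝ) : Prop :=
  ContDiff ℝ (⊤ : ℕ∞) (fun p : ℝ × (Fin n → ℝ) × (Fin n → ℝ) => G p.1 p.2.1 p.2.2)

/-- The common transformation law of temporal semisprays (`c = 2`) and of the
temporal components of nonlinear connections (`c = 1`):
`c·H̃^{(k)} = c·H^{(j)} (dt/dt̃)² ∂x̃^k/∂x^j − (dt/dt̃) ∂x̃₁^k/∂t`. -/
def TemporalLaw {n : ℕ} (a : ℝ → ℝ) (φ : (Fin n → ℝ) → (Fin n → ℝ)) (c : ℝ)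
    (H Ht : ℝ → (Fin n → ℝ) → (Fin n → ℝ) → Fin n → ℝ) : Prop :=
  ∀ t x v k, c * Ht (a t) (φ x) (fib a φ t x v) k =
    c * (∑ j, H t x v j * (dtdT a t) ^ 2 * Jac φ x k j)
      - dtdT a t * deriv (fun s => fib a φ s x v k) t

/-- The spatial semispray transformation law:
`2G̃^{(k)} = 2G^{(j)} (dt/dt̃)² ∂x̃^k/∂x^j − (∂x^m/∂x̃^j)(∂x̃₁^k/∂x^m) x̃₁^j`. -/
def SpatialSemisprayLaw {n : ℕ} (a : ℝ → ℝ) (φ ψ : (Fin n → ℝ) → (Fin n → ℝ))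
    (G Gt : ℝ → (Fin n → ℝ) → (Fin n → ℝ) → Fin n → ℝ) : Prop :=
  ∀ t x v k, 2 * Gt (a t) (φ x) (fib a φ t x v) k =
    2 * (∑ j, G t x v j * (dtdT a t) ^ 2 * Jac φ x k j)
      - ∑ j, ∑ m, Jac ψ (φ x) m j * pd (fun y => fib a φ t y v k) x m
          * fib a φ t x v j

/-- The transformation law of the spatial components of a nonlinear connection:
`Ñ^{(k)}_{(1)l} = N^{(j)}_{(1)i} (dt/dt̃)(∂x^i/∂x̃^l)(∂x̃^k/∂x^j) − (∂x^m/∂x̃^l)(∂x̃₁^k/∂x^m)`. -/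
def SpatialConnLaw {n : ℕ} (a : ℝ → ℝ) (φ ψ : (Fin n → ℝ) → (Fin n → ℝ))
    (N Nt : ℝ → (Fin n → ℝ) → (Fin n → ℝ) → Fin n → Fin n → ℝ) : Prop :=
  ∀ t x v k l, Nt (a t) (φ x) (fib a φ t x v) k l =
    (∑ j, ∑ i, N t x v j i * dtdT a t * Jac ψ (φ x) i l * Jac φ x k j)
      - ∑ m, Jac ψ (φ x) m l * pd (fun y => fib a φ t y v k) x m

/-- The SODE transformation law:
`F̃^{(r)} = F^{(j)} (dt/dt̃)² ∂x̃^r/∂x^j − (dt/dt̃) ∂x̃₁^r/∂t − (∂x^m/∂x̃^j)(∂x̃₁^r/∂x^m) x̃₁^j`. -/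
def SODELaw {n : ℕ} (a : ℝ → ℝ) (φ ψ : (Fin n → ℝ) → (Fin n → ℝ))
    (F Ft : ℝ → (Fin n → ℝ) → (Fin n → ℝ) → Fin n → ℝ) : Prop :=
  ∀ t x v k, Ft (a t) (φ x) (fib a φ t x v) k =
    (∑ j, F t x v j * (dtdT a t) ^ 2 * Jac φ x k j)
      - dtdT a t * deriv (fun s => fib a φ s x v k) t
      - ∑ j, ∑ m, Jac ψ (φ x) m j * pd (fun y => fib a φ t y v k) x m
          * fib a φ t x v j

/-- The transformation law of the temporal Christoffel symbol:
`H̃¹₁₁ = H¹₁₁ (dt/dt̃) + (dt̃/dt)(d²t/dt̃²)`. -/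
def TemporalChristoffelLaw (a b H Ht : ℝ → ℝ) : Prop :=
  ∀ t, Ht (a t) = H t * dtdT a t + deriv a t * deriv (deriv b) (a t)

lemma pd_eq_fderiv' {n : ℕ} {f : (Fin n → ℝ) → ℝ} {x : Fin n → ℝ}
    (hf : DifferentiableAt ℝ f x) (j : Fin n) :
    pd f x j = fderiv ℝ f x (Pi.single j 1) := by
  have h1 : HasDerivAt (Function.update x j) (Pi.single j (1:ℝ)) (x j) :=
    hasDerivAt_update x j (x j)
  have h2 : HasFDerivAt f (fderiv ℝ f x) (Function.update x j (x j)) := by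
    rw [Function.update_eq_self]; exact hf.hasFDerivAt
  exact (h2.comp_hasDerivAt (x j) h1).deriv

lemma fderiv_apply_sum' {n : ℕ} {f : (Fin n → ℝ) → ℝ} {x : Fin n → ℝ}
    (u : Fin n → ℝ) :
    fderiv ℝ f x u = ∑ l, u l * fderiv ℝ f x (Pi.single l 1) := by
  have hu : u = ∑ l, u l • (Pi.single l 1 : Fin n → ℝ) := by
    funext i
    simp [Finset.sum_apply, Pi.single_apply]
  conv_lhs => rw [hu]
  rw [map_sum]
  simp [smul_eq_mul]

lemma pd_coord' {n : ℕ} (x : Fin n → ℝ) (i p : Fin n) :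
    pd (fun y : Fin n → ℝ => y i) x p = if i = p then 1 else 0 := by
  unfold pd
  by_cases h : i = p
  · subst h
    simp only [Function.update_self, if_pos rfl]
    exact deriv_id (x i)
  · simp only [if_neg h]
    have : (fun s => Function.update x p s i) = fun _ => x i := by
      funext s; exact Function.update_of_ne h s x
    rw [this, deriv_const]

lemma jac_orth' {n : ℕ} {φ ψ : (Fin n → ℝ) → (Fin n → ℝ)}
    (hφ : ContDiff ℝ (⊤ : ℕ∞) φ) (hψ : ContDiff ℝ (⊤ : ℕ∞) ψ) (hinv : ∀ x, ψ (φ x) = x)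
    (x : Fin n → ℝ) (i p : Fin n) :
    ∑ l, Jac ψ (φ x) i l * Jac φ x l p = if i = p then 1 else 0 := by
  have hφd : DifferentiableAt ℝ φ x := (hφ.differentiable (by simp)).differentiableAt
  have hψc : DifferentiableAt ℝ (fun z => ψ z i) (φ x) :=
    differentiableAt_pi.1 ((hψ.differentiable (by simp)).differentiableAt) i
  have hφc : ∀ l, DifferentiableAt ℝ (fun y => φ y l) x :=
    fun l => differentiableAt_pi.1 hφd l
  have hcd : DifferentiableAt ℝ (fun y => ψ (φ y) i) x := hψc.comp x hφd
  have hch : fderiv ℝ (fun y => ψ (φ y) i) x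
      = (fderiv ℝ (fun z => ψ z i) (φ x)).comp (fderiv ℝ φ x) :=
    fderiv_comp x hψc hφd
  have hpi : fderiv ℝ φ x = ContinuousLinearMap.pi (fun l => fderiv ℝ (fun y => φ y l) x) := by
    have := fderiv_pi (𝕜 := ℝ) (φ := fun l y => φ y l) (x := x) hφc
    simpa using this
  have key : pd (fun y => ψ (φ y) i) x p
      = ∑ l, Jac φ x l p * Jac ψ (φ x) i l := by
    rw [pd_eq_fderiv' hcd, hch]
    simp only [ContinuousLinearMap.comp_apply]
    rw [fderiv_apply_sum']
    refine Finset.sum_congr rfl fun l _ => ?_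
    rw [hpi]
    simp only [ContinuousLinearMap.pi_apply]
    rw [Jac, Jac, pd_eq_fderiv' (hφc l) p, pd_eq_fderiv' hψc l]
  have hid : (fun y : Fin n → ℝ => ψ (φ y) i) = fun y => y i := by
    funext y; rw [hinv]
  rw [hid, pd_coord'] at key
  rw [key]
  exact Finset.sum_congr rfl fun l _ => mul_comm _ _

lemma main_calc' {n : ℕ} (a : ℝ → ℝ) (φ ψ : (Fin n → ℝ) → (Fin n → ℝ))
    (hφ : ContDiff ℝ (⊤ : ℕ∞) φ) (hψ : ContDiff ℝ (⊤ : ℕ∞) ψ) (hinv : ∀ x, ψ (φ x) = x)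
    (N Nt : ℝ → (Fin n → ℝ) → (Fin n → ℝ) → Fin n → Fin n → ℝ)
    (hlaw : ∀ t x v k l, Nt (a t) (φ x) (fib a φ t x v) k l =
      (∑ j, ∑ i, N t x v j i * dtdT a t * Jac ψ (φ x) i l * Jac φ x k j)
        - ∑ m, Jac ψ (φ x) m l * pd (fun y => fib a φ t y v k) x m)
    (t : ℝ) (x v : Fin n → ℝ) (k : Fin n) :
    2 * ((1/2 : ℝ) * ∑ m, Nt (a t) (φ x) (fib a φ t x v) k m * fib a φ t x v m) =
    2 * (∑ j, ((1/2 : ℝ) * ∑ m, N t x v j m * v m) * (dtdT a t) ^ 2 * Jac φ x k j)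
      - ∑ j, ∑ m, Jac ψ (φ x) m j * pd (fun y => fib a φ t y v k) x m
          * fib a φ t x v j := by
  have key : ∀ i, ∑ l, Jac ψ (φ x) i l * fib a φ t x v l = v i * dtdT a t := by
    intro i
    simp only [fib]
    calc ∑ l, Jac ψ (φ x) i l * ((∑ p, Jac φ x l p * v p) * dtdT a t)
        = ∑ l, ∑ p, Jac ψ (φ x) i l * Jac φ x l p * (v p * dtdT a t) := by
          refine Finset.sum_congr rfl fun l _ => ?_
          rw [Finset.sum_mul, Finset.mul_sum]
          exact Finset.sum_congr rfl fun p _ => by ring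
      _ = ∑ p, (∑ l, Jac ψ (φ x) i l * Jac φ x l p) * (v p * dtdT a t) := by
          rw [Finset.sum_comm]
          exact Finset.sum_congr rfl fun p _ => (Finset.sum_mul _ _ _).symm
      _ = ∑ p, (if i = p then (1:ℝ) else 0) * (v p * dtdT a t) := by
          refine Finset.sum_congr rfl fun p _ => ?_
          rw [jac_orth' hφ hψ hinv]
      _ = v i * dtdT a t := by simp
  have hlaw' := fun l => hlaw t x v k l
  calc 2 * ((1/2 : ℝ) * ∑ m, Nt (a t) (φ x) (fib a φ t x v) k m * fib a φ t x v m)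
      = ∑ l, Nt (a t) (φ x) (fib a φ t x v) k l * fib a φ t x v l := by ring
    _ = ∑ l, ((∑ j, ∑ i, N t x v j i * dtdT a t * Jac ψ (φ x) i l * Jac φ x k j)
          - ∑ m, Jac ψ (φ x) m l * pd (fun y => fib a φ t y v k) x m) * fib a φ t x v l := by
        exact Finset.sum_congr rfl fun l _ => by rw [hlaw' l]
    _ = (∑ l, (∑ j, ∑ i, N t x v j i * dtdT a t * Jac ψ (φ x) i l * Jac φ x k j)
            * fib a φ t x v l)
        - ∑ l, (∑ m, Jac ψ (φ x) m l * pd (fun y => fib a φ t y v k) x m) * fib a φ t x v l := by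
        rw [← Finset.sum_sub_distrib]
        exact Finset.sum_congr rfl fun l _ => sub_mul _ _ _
    _ = 2 * (∑ j, ((1/2 : ℝ) * ∑ m, N t x v j m * v m) * (dtdT a t) ^ 2 * Jac φ x k j)
        - ∑ j, ∑ m, Jac ψ (φ x) m j * pd (fun y => fib a φ t y v k) x m * fib a φ t x v j := by
        congr 1
        · calc ∑ l, (∑ j, ∑ i, N t x v j i * dtdT a t * Jac ψ (φ x) i l * Jac φ x k j)
                * fib a φ t x v l
              = ∑ l, ∑ j, ∑ i, N t x v j i * dtdT a t * Jac ψ (φ x) i l * Jac φ x k j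
                  * fib a φ t x v l := by
                refine Finset.sum_congr rfl fun l _ => ?_
                rw [Finset.sum_mul]
                exact Finset.sum_congr rfl fun j _ => Finset.sum_mul _ _ _
            _ = ∑ j, ∑ i, ∑ l, N t x v j i * dtdT a t * Jac ψ (φ x) i l * Jac φ x k j
                  * fib a φ t x v l := by
                rw [Finset.sum_comm]
                exact Finset.sum_congr rfl fun j _ => Finset.sum_comm
            _ = ∑ j, ∑ i, N t x v j i * dtdT a t * Jac φ x k j
                  * (∑ l, Jac ψ (φ x) i l * fib a φ t x v l) := by
                refine Finset.sum_congr rfl fun j _ => Finset.sum_congr rfl fun i _ => ?_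
                rw [Finset.mul_sum]
                exact Finset.sum_congr rfl fun l _ => by ring
            _ = ∑ j, ∑ i, N t x v j i * dtdT a t * Jac φ x k j * (v i * dtdT a t) := by
                exact Finset.sum_congr rfl fun j _ =>
                  Finset.sum_congr rfl fun i _ => by rw [key i]
            _ = 2 * (∑ j, ((1/2 : ℝ) * ∑ m, N t x v j m * v m) * (dtdT a t) ^ 2 * Jac φ x k j) := by
                rw [Finset.mul_sum]
                refine Finset.sum_congr rfl fun j _ => ?_
                have h : ∑ i, N t x v j i * dtdT a t * Jac φ x k j * (v i * dtdT a t)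
                    = (∑ i, N t x v j i * v i) * (dtdT a t ^ 2 * Jac φ x k j) := by
                  rw [Finset.sum_mul]
                  exact Finset.sum_congr rfl fun i _ => by ring
                rw [h]; ring
        · refine Finset.sum_congr rfl fun l _ => ?_
          rw [Finset.sum_mul]

/-- Given spatial components of a nonlinear connection, `G^{(j)} = (1/2) N^{(j)}_{(1)m} x₁^m`
transforms as a spatial semispray. -/
theorem spatial_connection_induces_semispray {n : ℕ}
    (a b : ℝ → ℝ) (φ ψ : (Fin n → ℝ) → (Fin n → ℝ))
    (hcc : IsCoordChange n a b φ ψ)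
    (N Nt : ℝ → (Fin n → ℝ) → (Fin n → ℝ) → Fin n → Fin n → ℝ)
    (hlaw : SpatialConnLaw a φ ψ N Nt) :
    SpatialSemisprayLaw a φ ψ
      (fun t x v j => (1 / 2) * ∑ m, N t x v j m * v m)
      (fun t x v j => (1 / 2) * ∑ m, Nt t x v j m * v m) := by
  intro t x v k
  obtain ⟨ha, hb, hba, hab, ha', hφ, hψ, hinv, hinv'⟩ := hcc
  exact main_calc' a φ ψ hφ hψ hinv N Nt hlaw t x v k
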